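/- Every tree in which every internal vertex has degree exactly 3 and which has n ≥ 3 leaves contains an edge whose removal separates the leaves into two sets each of size at least n/3. -/

import Mathlib

/-!
Choose an edge `uv` minimising the larger of the leaf counts on its two sides, and suppose the
`v` side carries more than `2n/3` of the `n` leaves. Then `v` is not a leaf, so it has exactly
two further neighbours `a`, `b`, and the leaves on the `v` side split between the branches at
`a` and at `b`, each of which contains a leaf. The heavier branch, say at `a`, carries at least
half but not all of them, so both sides of the edge `va` carry fewer leaves than the `v` side
of `uv`, contradicting minimality.
-/

open SimpleGraph

namespace SimpleGraph
variable {V : Type*} {G : SimpleGraph V} {u v w a b : V}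

def branch (G : SimpleGraph V) (u v : V) : Set V :=
  {w | (G.deleteEdges {s(u, v)}).Reachable v w}

lemma mem_branch_self (u v : V) : v ∈ G.branch u v := Reachable.refl v

lemma mem_branch_swap : w ∈ G.branch v u ↔ (G.deleteEdges {s(u, v)}).Reachable u w := by
  rw [branch, Sym2.eq_swap]
  rfl

lemma IsBridge.notMem_branch (h : G.IsBridge s(u, v)) : u ∉ G.branch u v :=
  fun hu ↦ isBridge_iff.mp h hu.symm

lemma IsBridge.disjoint_branch (h : G.IsBridge s(u, v)) :
    Disjoint (G.branch u v) (G.branch v u) :=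
  Set.disjoint_left.mpr fun _ hv hu ↦ isBridge_iff.mp h ((mem_branch_swap.mp hu).trans hv.symm)

lemma Preconnected.branch_union_branch (hG : G.Preconnected) (u v : V) :
    G.branch u v ∪ G.branch v u = Set.univ := by
  refine Set.eq_univ_of_forall fun w ↦ ?_
  suffices ∀ {x y : V} (p : G.Walk x y), y = v → x ∈ G.branch u v ∪ G.branch v u from
    this (hG w v).some rfl
  intro x y p
  induction p with
  | nil => rintro rfl; exact Or.inl (mem_branch_self u _)
  | @cons x z _ hxz _ ih =>
    intro hy
    by_cases he : s(x, z) = s(u, v)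
    · rcases Sym2.eq_iff.mp he with ⟨rfl, -⟩ | ⟨rfl, -⟩
      · exact Or.inr (mem_branch_self _ _)
      · exact Or.inl (mem_branch_self _ _)
    · have hzx : (G.deleteEdges {s(u, v)}).Reachable z x :=
        (deleteEdges_adj.mpr ⟨hxz, he⟩).reachable.symm
      rcases ih hy with h | h
      · exact Or.inl (Reachable.trans h hzx)
      · exact Or.inr (mem_branch_swap.mpr ((mem_branch_swap.mp h).trans hzx))

lemma branch_subset_insert_biUnion (u v : V) :
    G.branch u v ⊆ insert v (⋃ a ∈ G.neighborSet v \ {u}, G.branch v a) := by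
  classical
  intro w hw
  obtain ⟨p, hp⟩ := reachable_deleteEdges_iff_exists_walk.mp hw
  have hpath := p.bypass_isPath
  have hedges := p.edges_bypass_subset_edges
  generalize p.bypass = q at hpath hedges
  cases q with
  | nil => exact Set.mem_insert _ _
  | @cons _ x _ hvx q =>
    rw [Walk.cons_isPath_iff] at hpath
    refine Set.mem_insert_of_mem _ (Set.mem_biUnion (x := x) ⟨hvx, ?_⟩ ?_)
    · rintro rfl
      exact hp (hedges (by simp [Sym2.eq_swap]))
    · exact reachable_deleteEdges_iff_exists_walk.mpr
        ⟨q, fun h ↦ hpath.2 (q.fst_mem_support_of_mem_edges h)⟩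

lemma IsAcyclic.branch_subset_branch (hG : G.IsAcyclic) (hva : G.Adj v a) (hau : a ≠ u) :
    G.branch v a ⊆ G.branch u v := by
  classical
  intro w hw
  obtain ⟨p, hp⟩ := reachable_deleteEdges_iff_exists_walk.mp hw
  have hvp : v ∉ p.support := fun hv ↦
    (isAcyclic_iff_forall_adj_isBridge.mp hG hva).notMem_branch
      (reachable_deleteEdges_iff_exists_walk.mpr
        ⟨p.takeUntil v hv, fun h ↦ hp (p.edges_takeUntil_subset_edges hv h)⟩)
  refine reachable_deleteEdges_iff_exists_walk.mpr ⟨Walk.cons hva p, ?_⟩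
  rw [Walk.edges_cons, List.mem_cons, not_or]
  refine ⟨fun h ↦ ?_, fun h ↦ hvp (p.snd_mem_support_of_mem_edges h)⟩
  rcases Sym2.eq_iff.mp h with ⟨-, h⟩ | ⟨h, -⟩
  · exact hva.ne h
  · exact hau h.symm

lemma IsAcyclic.disjoint_branch_of_ne (hG : G.IsAcyclic) (hva : G.Adj v a) (hvb : G.Adj v b)
    (hab : a ≠ b) : Disjoint (G.branch v a) (G.branch v b) :=
  ((isAcyclic_iff_forall_adj_isBridge.mp hG hva).disjoint_branch).mono_right
    (hG.branch_subset_branch hvb hab.symm)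

lemma IsTree.branch_eq_compl (hT : G.IsTree) (huv : G.Adj u v) :
    G.branch v u = (G.branch u v)ᶜ :=
  (IsCompl.of_eq ((isAcyclic_iff_forall_adj_isBridge.mp hT.isAcyclic huv).disjoint_branch).eq_bot
    (hT.connected.preconnected.branch_union_branch u v)).compl_eq.symm

section Degree

variable [Fintype V] [DecidableRel G.Adj]

lemma ncard_neighborSet_diff_singleton (huv : G.Adj u v) :
    (G.neighborSet v \ {u}).ncard = G.degree v - 1 := by
  rw [Set.ncard_sdiff_singleton_of_mem (show u ∈ G.neighborSet v from huv.symm),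
    ← Nat.card_coe_set_eq, Nat.card_eq_fintype_card, card_neighborSet_eq_degree]

lemma exists_neighborSet_diff_eq_pair (huv : G.Adj u v) (hv : G.degree v = 3) :
    ∃ a b, a ≠ b ∧ G.neighborSet v \ {u} = {a, b} :=
  Set.ncard_eq_two.mp (by rw [ncard_neighborSet_diff_singleton huv, hv])

lemma branch_subset_singleton (huv : G.Adj u v) (hv : G.degree v = 1) :
    G.branch u v ⊆ {v} := by
  have hN : G.neighborSet v \ {u} = ∅ :=
    (Set.ncard_eq_zero).mp (by rw [ncard_neighborSet_diff_singleton huv, hv])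
  simpa [hN] using branch_subset_insert_biUnion (G := G) u v

lemma IsAcyclic.exists_degree_eq_one_mem_branch (hG : G.IsAcyclic) (huv : G.Adj u v) :
    ∃ w ∈ G.branch u v, G.degree w = 1 := by
  induction hk : (G.branch u v).ncard using Nat.strong_induction_on generalizing u v with
  | _ k ih =>
  by_cases hv : G.degree v = 1
  · exact ⟨v, mem_branch_self u v, hv⟩
  obtain ⟨a, hva, hau⟩ : (G.neighborSet v \ {u}).Nonempty := by
    refine Set.nonempty_of_ncard_ne_zero ?_
    have := (G.degree_pos_iff_exists_adj v).mpr ⟨u, huv.symm⟩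
    rw [ncard_neighborSet_diff_singleton huv]
    omega
  have hsub := hG.branch_subset_branch hva hau
  have hssub : G.branch v a ⊂ G.branch u v := (Set.ssubset_iff_of_subset hsub).mpr
    ⟨v, mem_branch_self u v, (isAcyclic_iff_forall_adj_isBridge.mp hG hva).notMem_branch⟩
  obtain ⟨w, hw, hw1⟩ := ih _ (hk ▸ Set.ncard_lt_ncard hssub) hva rfl
  exact ⟨w, hsub hw, hw1⟩

variable (G) in
noncomputable def branchLeafCount (u v : V) : ℕ :=
  ({w | G.degree w = 1} ∩ G.branch u v).ncard

lemma branchLeafCount_le_one (huv : G.Adj u v) (hv : G.degree v = 1) :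
    G.branchLeafCount u v ≤ 1 :=
  (Set.ncard_le_ncard (Set.inter_subset_right.trans (branch_subset_singleton huv hv))).trans
    (Set.ncard_singleton v).le

lemma IsAcyclic.branchLeafCount_pos (hG : G.IsAcyclic) (huv : G.Adj u v) :
    0 < G.branchLeafCount u v := by
  obtain ⟨w, hw, hw1⟩ := hG.exists_degree_eq_one_mem_branch huv
  exact (Set.ncard_pos).mpr ⟨w, hw1, hw⟩

lemma IsTree.branchLeafCount_add (hT : G.IsTree) (huv : G.Adj u v) :
    G.branchLeafCount u v + G.branchLeafCount v u = {w | G.degree w = 1}.ncard := by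
  rw [branchLeafCount, branchLeafCount, hT.branch_eq_compl huv, ← Set.sdiff_eq,
    Set.ncard_inter_add_ncard_sdiff_eq_ncard]

lemma IsAcyclic.branchLeafCount_eq_add (hG : G.IsAcyclic) (hv : G.degree v ≠ 1)
    (hab : a ≠ b) (hN : G.neighborSet v \ {u} = {a, b}) :
    G.branchLeafCount u v = G.branchLeafCount v a + G.branchLeafCount v b := by
  have ha : a ∈ G.neighborSet v \ {u} := hN ▸ Or.inl rfl
  have hb : b ∈ G.neighborSet v \ {u} := hN ▸ Or.inr rfl
  have hsplit : {w | G.degree w = 1} ∩ G.branch u v =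
      ({w | G.degree w = 1} ∩ G.branch v a) ∪ ({w | G.degree w = 1} ∩ G.branch v b) := by
    rw [← Set.inter_union_distrib_left]
    refine subset_antisymm (fun w ⟨hw1, hw⟩ ↦ ⟨hw1, ?_⟩) (Set.inter_subset_inter_right _
      (Set.union_subset (hG.branch_subset_branch ha.1 ha.2) (hG.branch_subset_branch hb.1 hb.2)))
    rcases branch_subset_insert_biUnion u v hw with rfl | hw
    · exact absurd hw1 hv
    · simpa [hN] using hw
  rw [branchLeafCount, hsplit, Set.ncard_union_eq]
  · rfl
  exact ((hG.disjoint_branch_of_ne ha.1 hb.1 hab).mono_left Set.inter_subset_right).mono_right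
    Set.inter_subset_right

lemma IsTree.exists_adj_max_branchLeafCount_lt (hT : G.IsTree)
    (hdeg : ∀ v : V, 2 ≤ G.degree v → G.degree v = 3) (huv : G.Adj u v)
    (h : 2 * {w | G.degree w = 1}.ncard < 3 * G.branchLeafCount u v) :
    ∃ a, G.Adj v a ∧ max (G.branchLeafCount v a) (G.branchLeafCount a v) <
      G.branchLeafCount u v := by
  have hsum := hT.branchLeafCount_add huv
  have hback := hT.isAcyclic.branchLeafCount_pos huv.symm
  have hv : G.degree v ≠ 1 := fun hv ↦ by
    have := branchLeafCount_le_one huv hv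
    omega
  have hv3 : G.degree v = 3 :=
    hdeg v (by have := (G.degree_pos_iff_exists_adj v).mpr ⟨u, huv.symm⟩; omega)
  obtain ⟨a, b, hab, hN⟩ := exists_neighborSet_diff_eq_pair huv hv3
  have hva : G.Adj v a := (hN ▸ Or.inl rfl : a ∈ G.neighborSet v \ {u}).1
  have hvb : G.Adj v b := (hN ▸ Or.inr rfl : b ∈ G.neighborSet v \ {u}).1
  have hsplit := hT.isAcyclic.branchLeafCount_eq_add hv hab hN
  have hpa := hT.isAcyclic.branchLeafCount_pos hva
  have hpb := hT.isAcyclic.branchLeafCount_pos hvb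
  have hsa := hT.branchLeafCount_add hva
  have hsb := hT.branchLeafCount_add hvb
  rcases le_total (G.branchLeafCount v b) (G.branchLeafCount v a) with hle | hle
  · exact ⟨a, hva, max_lt (by omega) (by omega)⟩
  · exact ⟨b, hvb, max_lt (by omega) (by omega)⟩

end Degree

end SimpleGraph

theorem tree_balanced_edge_deg3_general {V : Type*} [Fintype V]
    (G : SimpleGraph V) [DecidableRel G.Adj] (hT : G.IsTree)
    (hdeg : ∀ v : V, 2 ≤ G.degree v → G.degree v = 3)
    (n : ℕ) (hn : n = {v : V | G.degree v = 1}.ncard) (hn3 : 3 ≤ n) :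
    ∃ u v : V, G.Adj u v ∧
      (n : ℝ) / 3 ≤
        ({w : V | G.degree w = 1 ∧ (G.deleteEdges {s(u, v)}).Reachable u w}.ncard : ℝ) ∧
      (n : ℝ) / 3 ≤
        ({w : V | G.degree w = 1 ∧ (G.deleteEdges {s(u, v)}).Reachable v w}.ncard : ℝ) := by
  obtain ⟨x, hx⟩ : {v : V | G.degree v = 1}.Nonempty := Set.nonempty_of_ncard_ne_zero (by omega)
  obtain ⟨y, hxy⟩ := (G.degree_pos_iff_exists_adj x).mp (by rw [hx]; omega)
  have : Nonempty G.Dart := ⟨⟨(x, y), hxy⟩⟩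
  let m : G.Dart → ℕ := fun d ↦
    max (G.branchLeafCount d.fst d.snd) (G.branchLeafCount d.snd d.fst)
  obtain ⟨⟨⟨u, v⟩, huv⟩, hmin⟩ := Finite.exists_min m
  change G.Adj u v at huv
  have hbalanced : ∀ {a b} (hab : G.Adj a b), m ⟨(a, b), hab⟩ = m ⟨(u, v), huv⟩ →
      3 * G.branchLeafCount a b ≤ 2 * n := fun {a b} hab hm ↦ by
    by_contra! h
    obtain ⟨c, hbc, hlt⟩ := hT.exists_adj_max_branchLeafCount_lt hdeg hab (hn ▸ h)
    have := hmin ⟨(b, c), hbc⟩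
    simp only [m] at hm this
    omega
  have hsum := hT.branchLeafCount_add huv
  have hbal_uv := hbalanced huv rfl
  have hbal_vu := hbalanced huv.symm (max_comm _ _)
  have hside : {w | G.degree w = 1 ∧ (G.deleteEdges {s(u, v)}).Reachable u w}.ncard =
      G.branchLeafCount v u :=
    congrArg Set.ncard (Set.ext fun _ ↦ and_congr_right' mem_branch_swap.symm)
  refine ⟨u, v, huv, ?_, ?_⟩
  · rw [hside, div_le_iff₀ three_pos]
    exact_mod_cast (by omega : n ≤ G.branchLeafCount v u * 3)
  · change _ ≤ (G.branchLeafCount u v : ℝ)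
    rw [div_le_iff₀ three_pos]
    exact_mod_cast (by omega : n ≤ G.branchLeafCount u v * 3)

/-- Every finite tree whose internal vertices all have degree exactly 3 and which has
`n ≥ 3` leaves contains an edge whose removal separates the leaves into two sets each of
size at least `n/3`. -/
theorem tree_balanced_edge_deg3 {V : Type*} [Fintype V] [DecidableEq V]
    (G : SimpleGraph V) [DecidableRel G.Adj] (hT : G.IsTree)
    (hdeg : ∀ v : V, 2 ≤ G.degree v → G.degree v = 3)
    (n : ℕ) (hn : n = {v : V | G.degree v = 1}.ncard) (hn3 : 3 ≤ n) :
    ∃ u v : V, G.Adj u v ∧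
      (n : ℝ) / 3 ≤
        ({w : V | G.degree w = 1 ∧ (G.deleteEdges {s(u, v)}).Reachable u w}.ncard : ℝ) ∧
      (n : ℝ) / 3 ≤
        ({w : V | G.degree w = 1 ∧ (G.deleteEdges {s(u, v)}).Reachable v w}.ncard : ℝ) :=
  tree_balanced_edge_deg3_general G hT hdeg n hn hn3
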